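/- Let L be a finite meet-semilattice, G a building set of L, and N ⊆ G. Then N is nested if and only if for every set {x₁,…,x_t} of pairwise incomparable elements of N with t ≥ 2, the join x₁∨…∨x_t exists in L and F(x₁∨…∨x_t) = {x₁,…,x_t}. -/

import Mathlib

attribute [local instance] Classical.propDecidable

universe u

/-- The set of maximal elements of `G` below `x`. -/
def maxBelow {L : Type u} [PartialOrder L] (G : Set L) (x : L) : Set L :=
  {g | g ∈ G ∧ g ≤ x ∧ ∀ h ∈ G, h ≤ x → g ≤ h → h = g}

/-- The tuple in the product of lower intervals which is `g` in the coordinate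
indexed by `g` and bottom elsewhere. -/
noncomputable def deltaTuple {L : Type u} [PartialOrder L] [OrderBot L] (G : Set L) (x : L)
    (g : maxBelow G x) : (h : maxBelow G x) → Set.Iic (h : L) :=
  fun h => if (h : L) = (g : L) then ⟨(h : L), le_refl _⟩ else ⟨⊥, bot_le⟩

/-- `G` is a (combinatorial) building set: `G` avoids the bottom element, and for every
`x ≠ ⊥` the interval `[⊥, x]` decomposes as the product of the intervals below the maximal
elements of `G` below `x`, via an isomorphism sending delta tuples to the corresponding
maximal elements. -/
def IsBuilding {L : Type u} [PartialOrder L] [OrderBot L] (G : Set L) : Prop :=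
  (∀ g ∈ G, g ≠ ⊥) ∧
  ∀ x : L, x ≠ ⊥ →
    ∃ φ : ((h : maxBelow G x) → Set.Iic (h : L)) ≃o Set.Iic x,
      ∀ g : maxBelow G x, ((φ (deltaTuple G x g) : Set.Iic x) : L) = (g : L)

/-- A subset `N` of a building set `G` is nested if for every finite set of at least two
pairwise incomparable elements of `N`, the join exists and does not belong to `G`. -/
def IsNested {L : Type u} [PartialOrder L] (G N : Set L) : Prop :=
  N ⊆ G ∧ ∀ T : Finset L, ↑T ⊆ N → 2 ≤ T.card →
    (∀ a ∈ T, ∀ b ∈ T, a ≠ b → ¬ a ≤ b) →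
    ∃ j : L, IsLUB (↑T : Set L) j ∧ j ∉ G

/-!
Through the decomposition `[⊥, j] ≃ ∏ [⊥, y]` over the factors `y` of `j`, every element of `G`
below `j` lives in a single coordinate. Hence if `j` is the join of some `S ⊆ G`, each factor `y`
of `j` is the join of the elements of `S` below it. For an antichain `T` of a nested set this
forces `y ∈ T`: no element of `T` below `y` would make `y = ⊥`, and two or more would have their
join `y` outside `G`. So the factors of the join of `T` are exactly `T`. Conversely, if the
factors of `j` are `T` and `j ∈ G`, then `j` is its own factor, so `j ∈ T` lies above the other
elements of `T`.
-/

open Set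

section Pi

variable {ι : Type*} [DecidableEq ι] {α : ι → Type*} [∀ i, Preorder (α i)]
  [∀ i, BoundedOrder (α i)]

theorem isLUB_inter_Iic_update_bot_top {A : Set (∀ i, α i)} (hA : IsLUB A ⊤) (i : ι)
    (hsupp : ∀ a ∈ A, a ≤ Function.update ⊥ i ⊤ ∨ a i = ⊥) :
    IsLUB (A ∩ Iic (Function.update ⊥ i ⊤)) (Function.update ⊥ i ⊤) := by
  refine ⟨fun a ha => ha.2, fun u hu k => ?_⟩
  have hv : Function.update ⊤ i (u i) ∈ upperBounds A := by
    intro a ha k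
    rcases eq_or_ne k i with rfl | hk
    · rw [Function.update_self]
      rcases hsupp a ha with h | h
      · exact hu ⟨ha, h⟩ k
      · exact h ▸ bot_le
    · rw [Function.update_of_ne hk]
      exact le_top
  rcases eq_or_ne k i with rfl | hk
  · simpa using hA.2 hv k
  · simp [Function.update_of_ne hk]

end Pi

theorem isLUB_preimage_val_Iic_iff {L : Type*} [SemilatticeInf L] {j y : L} {s : Set L}
    (hs : s ⊆ Iic j) (hy : y ≤ j) :
    IsLUB (Subtype.val ⁻¹' s : Set (Iic j)) ⟨y, hy⟩ ↔ IsLUB s y := by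
  have himage : Subtype.val '' (Subtype.val ⁻¹' s : Set (Iic j)) = s := by
    rw [Subtype.image_preimage_coe, inter_eq_right.2 hs]
  refine ⟨fun h => ⟨fun x hx => ?_, fun u hu => ?_⟩, fun h => ?_⟩
  · exact h.1 (show (⟨x, hs hx⟩ : Iic j) ∈ Subtype.val ⁻¹' s from hx)
  · have : (⟨y, hy⟩ : Iic j) ≤ ⟨u ⊓ j, inf_le_right⟩ :=
      h.2 fun b hb => Subtype.coe_le_coe.1 (le_inf (hu hb) b.2)
    exact (Subtype.coe_le_coe.2 this).trans inf_le_left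
  · exact IsLUB.of_image (f := Subtype.val) Subtype.coe_le_coe (by rwa [himage])

section BuildingSet

variable {L : Type u}

theorem self_mem_maxBelow [PartialOrder L] {G : Set L} {x : L} (hx : x ∈ G) :
    x ∈ maxBelow G x :=
  ⟨hx, le_rfl, fun _ _ hle hge => le_antisymm hle hge⟩

theorem exists_mem_maxBelow_ge [PartialOrder L] [Finite L] {G : Set L} {x g : L} (hg : g ∈ G)
    (hgx : g ≤ x) : ∃ y ∈ maxBelow G x, g ≤ y := by
  obtain ⟨m, hm, hmax⟩ := Set.Finite.exists_maximalFor id {h | h ∈ G ∧ g ≤ h ∧ h ≤ x}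
    (Set.toFinite _) ⟨g, hg, le_rfl, hgx⟩
  exact ⟨m, ⟨hm.1, hm.2.2, fun h hhG hhx hmh =>
    le_antisymm (hmax ⟨hhG, hm.2.1.trans hmh, hhx⟩ hmh) hmh⟩, hm.2.1⟩

theorem deltaTuple_eq_update [PartialOrder L] [OrderBot L] (G : Set L) (x : L)
    (g : maxBelow G x) : deltaTuple G x g = Function.update ⊥ g ⊤ := by
  funext h
  by_cases hg : h = g
  · subst hg
    rw [Function.update_self]
    exact if_pos rfl
  · rw [Function.update_of_ne hg]
    exact if_neg (Subtype.coe_injective.ne hg)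

theorem IsBuilding.isLUB_inter_Iic_of_mem_maxBelow [SemilatticeInf L] [OrderBot L] [Finite L]
    {G : Set L} (hG : IsBuilding G) {S : Set L} (hSG : S ⊆ G) {j : L} (hj : IsLUB S j) {y : L}
    (hy : y ∈ maxBelow G j) : IsLUB (S ∩ Iic y) y := by
  have hyj : y ≤ j := hy.2.1
  obtain ⟨φ, hφ⟩ := hG.2 j fun h => hG.1 y hy.1 (le_bot_iff.1 (h ▸ hyj))
  have hSj : S ⊆ Iic j := fun s hs => hj.1 hs
  set y' : maxBelow G j := ⟨y, hy⟩
  set S' : Set (Iic j) := Subtype.val ⁻¹' S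
  have hφy : φ.symm ⟨y, hyj⟩ = deltaTuple G j y' := φ.symm_apply_eq.2 (Subtype.ext (hφ y').symm)
  have hA : IsLUB (φ.symm '' S') ⊤ := by
    rw [← φ.symm.map_top]
    exact φ.symm.isLUB_image'.2 ((isLUB_preimage_val_Iic_iff hSj le_rfl).2 hj)
  -- each element of `S` lies below a single factor of `j`, so its tuple is supported there
  have hsupp : ∀ a ∈ φ.symm '' S', a ≤ Function.update ⊥ y' ⊤ ∨ a y' = ⊥ := by
    rintro _ ⟨b, hb, rfl⟩
    obtain ⟨z, hz, hbz⟩ := exists_mem_maxBelow_ge (hSG hb) b.2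
    have hbδ : φ.symm b ≤ deltaTuple G j ⟨z, hz⟩ := by
      rw [φ.symm_apply_le, ← Subtype.coe_le_coe, hφ]
      exact hbz
    rw [deltaTuple_eq_update] at hbδ
    by_cases hzy : (⟨z, hz⟩ : maxBelow G j) = y'
    · rw [← hzy]
      exact .inl hbδ
    · refine .inr (le_bot_iff.1 ?_)
      simpa [Function.update_of_ne (Ne.symm hzy)] using hbδ y'
  have hδ := isLUB_inter_Iic_update_bot_top hA y' hsupp
  rw [← deltaTuple_eq_update, ← hφy, ← φ.symm.image_Iic, ← image_inter φ.symm.injective,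
    φ.symm.isLUB_image'] at hδ
  exact (isLUB_preimage_val_Iic_iff (inter_subset_left.trans hSj) hyj).1 hδ

end BuildingSet

section Nested

variable {L : Type u} {G N : Set L} {T : Finset L}

theorem IsNested.mem_of_isLUB [PartialOrder L] [OrderBot L] (hnest : IsNested G N) (hTN : ↑T ⊆ N)
    (hanti : IsAntichain (· ≤ ·) (T : Set L)) {y : L} (hy : IsLUB (T : Set L) y) (hyG : y ∈ G)
    (hy0 : y ≠ ⊥) : y ∈ T := by
  obtain hcard | hcard | hcard : T.card = 0 ∨ T.card = 1 ∨ 2 ≤ T.card := by omega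
  · rw [Finset.card_eq_zero.1 hcard, Finset.coe_empty, isLUB_empty_iff] at hy
    exact absurd hy.eq_bot hy0
  · obtain ⟨a, rfl⟩ := Finset.card_eq_one.1 hcard
    rw [Finset.coe_singleton] at hy
    simp [hy.unique isLUB_singleton]
  · obtain ⟨j, hj, hjG⟩ := hnest.2 T hTN hcard hanti
    exact absurd (hj.unique hy ▸ hyG) hjG

theorem IsNested.maxBelow_eq_of_isLUB [SemilatticeInf L] [OrderBot L] [Finite L]
    (hG : IsBuilding G) (hnest : IsNested G N) (hTN : ↑T ⊆ N)
    (hanti : IsAntichain (· ≤ ·) (T : Set L)) {j : L} (hj : IsLUB (T : Set L) j) :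
    maxBelow G j = T := by
  have hfactor : ∀ y ∈ maxBelow G j, y ∈ T := by
    intro y hy
    have hTy : IsLUB ((T.filter (· ≤ y) : Finset L) : Set L) y := by
      rw [Finset.coe_filter]
      exact hG.isLUB_inter_Iic_of_mem_maxBelow (fun t ht => hnest.1 (hTN ht)) hj hy
    have hsub : ((T.filter (· ≤ y) : Finset L) : Set L) ⊆ T :=
      Finset.coe_subset.2 (Finset.filter_subset _ _)
    exact Finset.mem_of_mem_filter y <|
      hnest.mem_of_isLUB (hsub.trans hTN) (hanti.subset hsub) hTy hy.1 (hG.1 y hy.1)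
  ext t
  refine ⟨hfactor t, fun ht => ?_⟩
  obtain ⟨y, hy, hty⟩ := exists_mem_maxBelow_ge (hnest.1 (hTN ht)) (hj.1 ht)
  rwa [hanti.eq ht (hfactor y hy) hty]

theorem notMem_of_maxBelow_eq_of_isLUB [PartialOrder L] (hanti : IsAntichain (· ≤ ·) (T : Set L))
    (hcard : 2 ≤ T.card) {j : L} (hj : IsLUB (T : Set L) j) (hfac : maxBelow G j = T) :
    j ∉ G := by
  intro hjG
  have hjT : j ∈ T := by simpa [hfac] using self_mem_maxBelow hjG
  obtain ⟨b, hb, hbj⟩ := Finset.exists_mem_ne hcard j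
  exact hbj (hanti.eq hb hjT (hj.1 hb))

end Nested

/-- `N ⊆ G` is nested iff for every finite antichain `T ⊆ N` with at least
two elements, the join of `T` exists and its set of factors is exactly `T`. -/
theorem isNested_iff_factors_of_antichain_joins {L : Type u} [SemilatticeInf L] [Fintype L]
    [OrderBot L] (G : Set L) (hG : IsBuilding G) (N : Set L) (hN : N ⊆ G) :
    IsNested G N ↔
      ∀ T : Finset L, ↑T ⊆ N → 2 ≤ T.card →
        (∀ a ∈ T, ∀ b ∈ T, a ≠ b → ¬ a ≤ b) →
        ∃ j : L, IsLUB (↑T : Set L) j ∧ maxBelow G j = ↑T := by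
  constructor
  · intro hnest T hTN hcard hanti
    obtain ⟨j, hj, -⟩ := hnest.2 T hTN hcard hanti
    exact ⟨j, hj, hnest.maxBelow_eq_of_isLUB hG hTN hanti hj⟩
  · intro h
    refine ⟨hN, fun T hTN hcard hanti => ?_⟩
    obtain ⟨j, hj, hfac⟩ := h T hTN hcard hanti
    exact ⟨j, hj, notMem_of_maxBelow_eq_of_isLUB hanti hcard hj hfac⟩
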